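/- Conversely, if a word w is accepted by the NFA N_ψ and σ is a symbolic run of the DDSA such that the history constraint hist(σ, w ⊗ σ) is satisfiable, then the product automaton N^ψ_{B,b} contains a path π from the initial node with σ(π) = σ, w(π) = w, and whose endpoint formula is logically equivalent to hist(σ, w ⊗ σ). -/
import Mathlib


/-- A data-aware dynamic system with arithmetic (DDSA). -/
structure DDSA (B A V D : Type) where
  trans : B → A → B → Prop
  write : A → Set V
  /-- `guard a u v`: the guard assignment reading `u` and writing `v`
  satisfies the executability constraint of `a`. -/
  guard : A → (V → D) → (V → D) → Prop
  final : B → Prop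

variable {B A V D Q : Type}

/-- Configuration maps `K : B → (V → D) → Prop`; letters of the NFA alphabet
`Σ = 2^Confs` are sets of configuration maps. -/
abbrev CMap (B V D : Type) := B → (V → D) → Prop

/-- `w(b)` — the conjunction `⋀_{K ∈ w} K(b)` of a letter `w` evaluated at
control state `b`. -/
def wEval (w : Set (CMap B V D)) (b : B) (α : V → D) : Prop :=
  ∀ K ∈ w, K b α

/-- `φ_ν` — the formula `⋀_{v ∈ V} v = ν(v)` over `V ∪ V₀`
(`Sum.inl` = current variables `V`, `Sum.inr` = initial copy `V₀`). -/
def phiNu (α : (V ⊕ V) → D) : Prop := ∀ v, α (Sum.inl v) = α (Sum.inr v)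

/-- The update `update(φ, a) = ∃U. φ(U) ∧ Δ_a(U, V)` of a formula over
`V ∪ V₀`, keeping the initial copy `V₀` fixed. -/
def updH (𝔅 : DDSA B A V D) (φ : ((V ⊕ V) → D) → Prop) (a : A)
    (α : (V ⊕ V) → D) : Prop :=
  ∃ u : V → D,
    φ (Sum.elim u fun v => α (Sum.inr v)) ∧
    𝔅.guard a u (fun v => α (Sum.inl v)) ∧
    ∀ v ∉ 𝔅.write a, α (Sum.inl v) = u v

/-- History constraint `hist(σ, θ⃗)` of a symbolic run with actions `acts`
and verification constraints `θ`. -/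
def histH (𝔅 : DDSA B A V D) (acts : ℕ → A) (θ : ℕ → (V → D) → Prop) :
    ℕ → ((V ⊕ V) → D) → Prop
  | 0, α => phiNu α ∧ θ 0 (fun v => α (Sum.inl v))
  | n + 1, α =>
      updH 𝔅 (histH 𝔅 acts θ n) (acts n) α ∧
      θ (n + 1) (fun v => α (Sum.inl v))

/-- A path of length `n` in the product automaton `N^ψ_{𝔅,b}` of the DDSA
`𝔅`, a control state `b` and an NFA with transition relation `ntrans` and
initial state `q0` over the alphabet of sets of configuration maps: the path
starts at the initial node `(b̂, q0, φ_ν)`, takes the dummy step into `b`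
reading the letter `letters 0`, and then follows DDSA transitions (with
actions `acts`) and NFA transitions simultaneously; each node carries a
formula `forms i` which must equal `update(previous, a) ∧ w(b')` and be
satisfiable. -/
def IsProductPath (𝔅 : DDSA B A V D)
    (ntrans : Q → Set (CMap B V D) → Q → Prop) (q0 : Q) (b : B) (n : ℕ)
    (bs : ℕ → B) (qs : ℕ → Q) (acts : ℕ → A)
    (letters : ℕ → Set (CMap B V D))
    (forms : ℕ → ((V ⊕ V) → D) → Prop) : Prop :=
  bs 0 = b ∧
  ntrans q0 (letters 0) (qs 0) ∧
  (forms 0 = fun α =>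
    phiNu α ∧ wEval (letters 0) (bs 0) (fun v => α (Sum.inl v))) ∧
  (∃ α, forms 0 α) ∧
  ∀ i < n,
    𝔅.trans (bs i) (acts i) (bs (i + 1)) ∧
    ntrans (qs i) (letters (i + 1)) (qs (i + 1)) ∧
    (forms (i + 1) = fun α =>
      updH 𝔅 (forms i) (acts i) α ∧
      wEval (letters (i + 1)) (bs (i + 1)) (fun v => α (Sum.inl v))) ∧
    (∃ α, forms (i + 1) α)

lemma histH_sat_pred (𝔅 : DDSA B A V D) (acts : ℕ → A)
    (θ : ℕ → (V → D) → Prop) (m : ℕ)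
    (h : ∃ α, histH 𝔅 acts θ (m + 1) α) : ∃ α, histH 𝔅 acts θ m α := by
  obtain ⟨α, ⟨u, hu, -, -⟩, -⟩ := h
  exact ⟨_, hu⟩

lemma histH_sat_le (𝔅 : DDSA B A V D) (acts : ℕ → A)
    (θ : ℕ → (V → D) → Prop) {m n : ℕ} (hmn : m ≤ n)
    (h : ∃ α, histH 𝔅 acts θ n α) : ∃ α, histH 𝔅 acts θ m α := by
  induction n with
  | zero => exact Nat.le_zero.mp hmn ▸ h
  | succ k ih =>
    rcases Nat.lt_or_ge m (k + 1) with hm | hm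
    · exact ih (Nat.lt_succ_iff.mp hm) (histH_sat_pred 𝔅 acts θ k h)
    · exact Nat.le_antisymm hmn hm ▸ h

/-- **Lemma pc, part 1.**  If the word `w = ⟨letters 0, …, letters n⟩` is
accepted by the NFA (there is an NFA run from `q0` through `qs` ending in a
final state), `σ` is a symbolic run of the DDSA (given by `bs`, `acts`,
starting at `b`), and the history constraint `hist(σ, w ⊗ σ)` is satisfiable,
then the product automaton contains a path `π` from the initial node with
`σ(π) = σ` and `w(π) = w` whose endpoint formula is logically equivalent to
`hist(σ, w ⊗ σ)`. -/
theorem accepted_word_gives_product_path (𝔅 : DDSA B A V D)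
    (ntrans : Q → Set (CMap B V D) → Q → Prop) (q0 : Q) (nfinal : Q → Prop)
    (b : B) (n : ℕ) (bs : ℕ → B) (qs : ℕ → Q) (acts : ℕ → A)
    (letters : ℕ → Set (CMap B V D))
    (hb : bs 0 = b)
    (hnfa0 : ntrans q0 (letters 0) (qs 0))
    (hnfa : ∀ i < n, ntrans (qs i) (letters (i + 1)) (qs (i + 1)))
    (hacc : nfinal (qs n))
    (hσ : ∀ i < n, 𝔅.trans (bs i) (acts i) (bs (i + 1)))
    (hsat : ∃ α, histH 𝔅 acts (fun i => wEval (letters i) (bs i)) n α) :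
    ∃ forms : ℕ → ((V ⊕ V) → D) → Prop,
      IsProductPath 𝔅 ntrans q0 b n bs qs acts letters forms ∧
      ∀ α, forms n α ↔
        histH 𝔅 acts (fun i => wEval (letters i) (bs i)) n α := by
  refine ⟨fun i => histH 𝔅 acts (fun i => wEval (letters i) (bs i)) i,
    ⟨hb, hnfa0, ?_, ?_, fun i hi => ⟨hσ i hi, hnfa i hi, ?_, ?_⟩⟩,
    fun α => Iff.rfl⟩
  · rfl
  · exact histH_sat_le 𝔅 acts _ (Nat.zero_le n) hsat
  · rfl
  · exact histH_sat_le 𝔅 acts _ hi hsat
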